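/- The modified minimal Bellman operator Φ̃^min, defined by Φ̃^min(x)(s) = Φ^min(x)(s) if Pr^{min}_s(◇T) > 0 and Φ̃^min(x)(s) = 0 if Pr^{min}_s(◇T) = 0, has a unique fixed point, and this fixed point equals lfp Φ^min, i.e., the minimal reachability probabilities. -/

import Mathlib

open scoped ENNReal
open Classical

noncomputable section

/-- Optimization direction: `dmin` for minimization, `dmax` for maximization. -/
inductive ODir | dmin | dmax

namespace ODir

/-- Apply the optimization direction to a set in a complete lattice. -/
def run {α : Type*} [CompleteLattice α] : ODir → Set α → α
  | dmin => sInf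
  | dmax => sSup

/-- The dual optimization direction: ¬min = max, ¬max = min. -/
def neg : ODir → ODir
  | dmin => dmax
  | dmax => dmin

end ODir

/-- A finite Markov decision process with states `S` and actions `A`:
a transition probability function `P` such that for each state and action the
probabilities sum to `1` or `0`, and every state has at least one enabled action. -/
structure CertMDP (S A : Type) [Fintype S] [Fintype A] where
  P : S → A → S → ℝ≥0∞
  sum_P : ∀ s a, (∑ s' : S, P s a s') = 1 ∨ (∑ s' : S, P s a s') = 0
  exists_enabled : ∀ s, ∃ a, (∑ s' : S, P s a s') = 1

namespace CertMDP

variable {S A : Type} [Fintype S] [Fintype A]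

/-- The set of actions enabled in state `s`. -/
def enabled (M : CertMDP S A) (s : S) : Set A := {a | (∑ s' : S, M.P s a s') = 1}

/-- The `a`-successors of `s`. -/
def Post (M : CertMDP S A) (s : S) (a : A) : Set S := {s' | M.P s a s' ≠ 0}

/-- Memoryless deterministic strategies. -/
def Strat (M : CertMDP S A) := {σ : S → A // ∀ s, σ s ∈ M.enabled s}

/-- Step-bounded reachability probability of `T` in the Markov chain induced by `σ`. -/
def prBounded (M : CertMDP S A) (σ : M.Strat) (T : Set S) : ℕ → S → ℝ≥0∞
  | 0, s => if s ∈ T then 1 else 0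
  | n + 1, s => if s ∈ T then 1 else ∑ s' : S, M.P s (σ.1 s) s' * prBounded M σ T n s'

/-- Reachability probability of `T` from `s` in the Markov chain induced by `σ`. -/
def prReach (M : CertMDP S A) (σ : M.Strat) (T : Set S) (s : S) : ℝ≥0∞ :=
  ⨆ n, M.prBounded σ T n s

/-- Optimal (min/max over memoryless deterministic strategies) reachability probability. -/
def optPr (M : CertMDP S A) (o : ODir) (T : Set S) (s : S) : ℝ≥0∞ :=
  o.run {p | ∃ σ : M.Strat, p = M.prReach σ T s}

/-- The distance operator `D^opt` on `(ℕ∞)^S`. -/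
def dist (M : CertMDP S A) (o : ODir) (T : Set S) (r : S → ℕ∞) : S → ℕ∞ :=
  fun s => if s ∈ T then 0
    else 1 + o.run ((fun a => sInf (r '' M.Post s a)) '' M.enabled s)

/-- The complementary distance operator `D̃^opt` on `(ℕ∞)^S`, with Iverson bracket. -/
def cdist (M : CertMDP S A) (o : ODir) (T : Set S) (r : S → ℕ∞) : S → ℕ∞ :=
  fun s => if s ∈ T then ⊤
    else o.run ((fun a => sInf (r '' M.Post s a) +
      (if ∃ u ∈ M.Post s a, ∃ v ∈ M.Post s a, r u ≠ r v then 1 else 0)) '' M.enabled s)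

/-- The Bellman operator `Φ^opt` for reachability. -/
def bellman (M : CertMDP S A) (o : ODir) (T : Set S) (x : S → ℝ≥0∞) : S → ℝ≥0∞ :=
  fun s => if s ∈ T then 1
    else o.run ((fun a => ∑ s' : S, M.P s a s' * x s') '' M.enabled s)

/-- The distance operator `D^σ` in the Markov chain induced by strategy `σ`. -/
def distS (M : CertMDP S A) (σ : M.Strat) (T : Set S) (r : S → ℕ∞) : S → ℕ∞ :=
  fun s => if s ∈ T then 0 else 1 + sInf (r '' M.Post s (σ.1 s))

/-- The Bellman operator `Φ^σ` in the Markov chain induced by strategy `σ`. -/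
def bellmanS (M : CertMDP S A) (σ : M.Strat) (T : Set S) (x : S → ℝ≥0∞) : S → ℝ≥0∞ :=
  fun s => if s ∈ T then 1 else ∑ s' : S, M.P s (σ.1 s) s' * x s'

/-- Step-bounded cumulated expected reward (target states absorb with reward 0). -/
def erBounded (M : CertMDP S A) (σ : M.Strat) (T : Set S) (rew : S → ℝ≥0∞) : ℕ → S → ℝ≥0∞
  | 0, _ => 0
  | n + 1, s => if s ∈ T then 0
      else rew s + ∑ s' : S, M.P s (σ.1 s) s' * erBounded M σ T rew n s'

/-- Expected reward accumulated until reaching `T` under `σ`, where paths never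
reaching `T` receive reward `∞` (the `* = ∞` semantics). -/
def expRew (M : CertMDP S A) (σ : M.Strat) (T : Set S) (rew : S → ℝ≥0∞) (s : S) : ℝ≥0∞ :=
  if M.prReach σ T s = 1 then ⨆ n, M.erBounded σ T rew n s else ⊤

/-- Optimal expected reward accumulated until reaching `T`. -/
def optER (M : CertMDP S A) (o : ODir) (T : Set S) (rew : S → ℝ≥0∞) (s : S) : ℝ≥0∞ :=
  o.run {p | ∃ σ : M.Strat, p = M.expRew σ T rew s}

/-- The Bellman operator `E^opt` for expected rewards. -/
def bellmanR (M : CertMDP S A) (o : ODir) (T : Set S) (rew : S → ℝ≥0∞) (x : S → ℝ≥0∞) :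
    S → ℝ≥0∞ :=
  fun s => if s ∈ T then 0
    else rew s + o.run ((fun a => ∑ s' : S, M.P s a s' * x s') '' M.enabled s)

end CertMDP

/-- The modified minimal Bellman operator `Φ̃^min`. -/
def CertMDP.modBellmanMin {S A : Type} [Fintype S] [Fintype A] (M : CertMDP S A) (T : Set S)
    (x : S → ℝ≥0∞) : S → ℝ≥0∞ :=
  fun s => if M.optPr ODir.dmin T s = 0 then 0 else M.bellman ODir.dmin T x s

section Aux

namespace CertMDP

variable {S A : Type} [Fintype S] [Fintype A] (M : CertMDP S A) (T : Set S)

lemma sum_P_le_one (s : S) (a : A) : (∑ s' : S, M.P s a s') ≤ 1 := by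
  rcases M.sum_P s a with h | h <;> simp [h]

lemma P_ne_top (s : S) (a : A) (s' : S) : M.P s a s' ≠ ⊤ := by
  intro h
  have h1 : M.P s a s' ≤ ∑ t : S, M.P s a t :=
    Finset.single_le_sum (fun _ _ => zero_le) (Finset.mem_univ s')
  have h2 := h1.trans (M.sum_P_le_one s a)
  rw [h] at h2
  simp at h2

lemma strat_nonempty : Nonempty M.Strat := by
  choose f hf using M.exists_enabled
  exact ⟨⟨f, hf⟩⟩

lemma sum_mul_le_one {x : S → ℝ≥0∞} (hx : ∀ t, x t ≤ 1) (s : S) (a : A) :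
    (∑ s' : S, M.P s a s' * x s') ≤ 1 := by
  calc ∑ s' : S, M.P s a s' * x s' ≤ ∑ s' : S, M.P s a s' * 1 :=
      Finset.sum_le_sum fun s' _ => mul_le_mul_right (hx s') _
    _ ≤ 1 := by simpa using M.sum_P_le_one s a

variable {M T}

lemma ne_top_of_le_one' {x : ℝ≥0∞} (h : x ≤ 1) : x ≠ ⊤ :=
  (h.trans_lt ENNReal.one_lt_top).ne

lemma prBounded_zero (σ : M.Strat) (s : S) :
    M.prBounded σ T 0 s = if s ∈ T then 1 else 0 := rfl

lemma prBounded_succ (σ : M.Strat) (n : ℕ) (s : S) :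
    M.prBounded σ T (n + 1) s =
      if s ∈ T then 1 else ∑ s' : S, M.P s (σ.1 s) s' * M.prBounded σ T n s' := rfl

lemma prBounded_le_one (σ : M.Strat) : ∀ (n : ℕ) (s : S), M.prBounded σ T n s ≤ 1 := by
  intro n
  induction n with
  | zero => intro s; rw [prBounded_zero]; split <;> simp
  | succ n ih =>
    intro s
    rw [prBounded_succ]
    split
    · exact le_refl 1
    · exact M.sum_mul_le_one ih s (σ.1 s)

lemma prBounded_le_succ (σ : M.Strat) : ∀ (n : ℕ) (s : S),
    M.prBounded σ T n s ≤ M.prBounded σ T (n + 1) s := by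
  intro n
  induction n with
  | zero =>
    intro s
    rw [prBounded_zero, prBounded_succ]
    split
    · exact le_refl 1
    · exact zero_le
  | succ n ih =>
    intro s
    rw [prBounded_succ, prBounded_succ]
    split
    · exact le_refl 1
    · exact Finset.sum_le_sum fun s' _ => mul_le_mul_right (ih s') _

lemma prBounded_mono (σ : M.Strat) (s : S) : Monotone fun n => M.prBounded σ T n s :=
  monotone_nat_of_le_succ fun n => prBounded_le_succ σ n s

lemma prReach_le_one (σ : M.Strat) (s : S) : M.prReach σ T s ≤ 1 :=
  iSup_le fun n => prBounded_le_one σ n s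

lemma prReach_of_mem (σ : M.Strat) {s : S} (hs : s ∈ T) : M.prReach σ T s = 1 :=
  le_antisymm (prReach_le_one σ s)
    (le_iSup_of_le 0 (by rw [prBounded_zero, if_pos hs]))

lemma prReach_fix (σ : M.Strat) {s : S} (hs : s ∉ T) :
    M.prReach σ T s = ∑ s' : S, M.P s (σ.1 s) s' * M.prReach σ T s' := by
  have h1 : M.prReach σ T s = ⨆ n, M.prBounded σ T (n + 1) s :=
    le_antisymm (iSup_le fun n => le_iSup_of_le n (prBounded_le_succ σ n s))
      (iSup_le fun n => le_iSup (fun n => M.prBounded σ T n s) (n + 1))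
  rw [h1]
  have h2 : ∀ n, M.prBounded σ T (n + 1) s
      = ∑ s' : S, M.P s (σ.1 s) s' * M.prBounded σ T n s' := fun n => by
    rw [prBounded_succ, if_neg hs]
  simp_rw [h2]
  unfold prReach
  simp_rw [ENNReal.mul_iSup]
  exact (ENNReal.finsetSum_iSup_of_monotone
    (s := Finset.univ) (f := fun s' n => M.P s (σ.1 s) s' * M.prBounded σ T n s')
    (fun s' i j hij => mul_le_mul_right (prBounded_mono σ s' hij) _)).symm

lemma optPr_min_def (s : S) :
    M.optPr ODir.dmin T s = sInf {p | ∃ σ : M.Strat, p = M.prReach σ T s} := rfl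

lemma optPr_le_prReach (σ : M.Strat) (s : S) :
    M.optPr ODir.dmin T s ≤ M.prReach σ T s := sInf_le ⟨σ, rfl⟩

lemma optPr_exists_strat (s : S) :
    ∃ σ : M.Strat, M.optPr ODir.dmin T s = M.prReach σ T s := by
  haveI : Finite M.Strat := Subtype.finite
  have hne : {p | ∃ σ : M.Strat, p = M.prReach σ T s}.Nonempty := by
    obtain ⟨σ⟩ := M.strat_nonempty
    exact ⟨_, σ, rfl⟩
  have heq : {p | ∃ σ : M.Strat, p = M.prReach σ T s}
      = Set.range (fun σ : M.Strat => M.prReach σ T s) := by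
    ext x; simp [eq_comm, Set.range]
  have hfin : {p | ∃ σ : M.Strat, p = M.prReach σ T s}.Finite := by
    rw [heq]; exact Set.finite_range _
  have := hne.csInf_mem hfin
  rw [← optPr_min_def] at this
  exact this

lemma optPr_of_mem {s : S} (hs : s ∈ T) : M.optPr ODir.dmin T s = 1 := by
  obtain ⟨σ, h⟩ := optPr_exists_strat (M := M) (T := T) s
  rw [h, prReach_of_mem σ hs]

lemma optPr_le_one (s : S) : M.optPr ODir.dmin T s ≤ 1 := by
  obtain ⟨σ, h⟩ := optPr_exists_strat (M := M) (T := T) s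
  rw [h]; exact prReach_le_one σ s

lemma bellman_min_of_mem {x : S → ℝ≥0∞} {s : S} (hs : s ∈ T) :
    M.bellman ODir.dmin T x s = 1 := if_pos hs

lemma bellman_min_of_not_mem {x : S → ℝ≥0∞} {s : S} (hs : s ∉ T) :
    M.bellman ODir.dmin T x s
      = sInf ((fun a => ∑ s' : S, M.P s a s' * x s') '' M.enabled s) := if_neg hs

lemma exists_min_action (x : S → ℝ≥0∞) (s : S) :
    ∃ a ∈ M.enabled s, (∑ s' : S, M.P s a s' * x s')
      = sInf ((fun a => ∑ s' : S, M.P s a s' * x s') '' M.enabled s) := by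
  have hne : (M.enabled s).Nonempty := M.exists_enabled s
  have h := (hne.image (fun a => ∑ s' : S, M.P s a s' * x s')).csInf_mem
    ((M.enabled s).toFinite.image _)
  obtain ⟨a, ha, hae⟩ := h
  exact ⟨a, ha, hae⟩

lemma fix_facts {y : S → ℝ≥0∞} (hfix : M.modBellmanMin T y = y) :
    (∀ s, M.optPr ODir.dmin T s = 0 → y s = 0) ∧
    (∀ s ∈ T, y s = 1) ∧
    (∀ s, s ∉ T → M.optPr ODir.dmin T s ≠ 0 →
      y s = sInf ((fun a => ∑ s' : S, M.P s a s' * y s') '' M.enabled s)) := by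
  refine ⟨fun s h0 => ?_, fun s hs => ?_, fun s hs h0 => ?_⟩
  · have h := congrFun hfix s
    simp only [CertMDP.modBellmanMin, if_pos h0] at h
    exact h.symm
  · have h := congrFun hfix s
    have h1 : M.optPr ODir.dmin T s = 1 := optPr_of_mem hs
    simp only [CertMDP.modBellmanMin, h1, if_neg (one_ne_zero (α := ℝ≥0∞))] at h
    rw [bellman_min_of_mem hs] at h
    exact h.symm
  · have h := congrFun hfix s
    simp only [CertMDP.modBellmanMin, if_neg h0] at h
    rw [bellman_min_of_not_mem hs] at h
    exact h.symm

lemma bellman_le_optPr (s : S) :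
    M.bellman ODir.dmin T (M.optPr ODir.dmin T) s ≤ M.optPr ODir.dmin T s := by
  by_cases hs : s ∈ T
  · rw [bellman_min_of_mem hs, optPr_of_mem hs]
  · obtain ⟨σ, hσ⟩ := optPr_exists_strat (M := M) (T := T) s
    rw [hσ, bellman_min_of_not_mem hs]
    refine le_trans (sInf_le ⟨σ.1 s, σ.2 s, rfl⟩) ?_
    rw [prReach_fix σ hs]
    exact Finset.sum_le_sum fun s' _ => mul_le_mul_right (optPr_le_prReach σ s') _

lemma optPr_bellman_fixed (s : S) :
    M.bellman ODir.dmin T (M.optPr ODir.dmin T) s = M.optPr ODir.dmin T s := by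
  choose f hf1 hf2 using fun s => exists_min_action (M := M) (M.optPr ODir.dmin T) s
  set σ : M.Strat := ⟨f, hf1⟩ with hσdef
  have hb : ∀ (n : ℕ) (t : S), M.prBounded σ T n t ≤ M.optPr ODir.dmin T t := by
    intro n
    induction n with
    | zero =>
      intro t
      rw [prBounded_zero]
      split
      · exact (optPr_of_mem ‹_›).ge
      · exact zero_le
    | succ n ih =>
      intro t
      rw [prBounded_succ]
      split
      · exact (optPr_of_mem ‹_›).ge
      · calc ∑ s' : S, M.P t (σ.1 t) s' * M.prBounded σ T n s'
            ≤ ∑ s' : S, M.P t (σ.1 t) s' * M.optPr ODir.dmin T s' :=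
              Finset.sum_le_sum fun s' _ => mul_le_mul_right (ih s') _
          _ = M.bellman ODir.dmin T (M.optPr ODir.dmin T) t := by
              rw [bellman_min_of_not_mem ‹_›]; exact hf2 t
          _ ≤ M.optPr ODir.dmin T t := bellman_le_optPr t
  have hr : ∀ t, M.prReach σ T t = M.optPr ODir.dmin T t := fun t =>
    le_antisymm (iSup_le fun n => hb n t) (optPr_le_prReach σ t)
  by_cases hs : s ∈ T
  · rw [bellman_min_of_mem hs, optPr_of_mem hs]
  · rw [bellman_min_of_not_mem hs, ← hf2 s, ← hr s, prReach_fix σ hs]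
    exact Finset.sum_congr rfl fun s' _ => by rw [hr s']

lemma le_prReach_of_fix {y : S → ℝ≥0∞} (hy1 : ∀ s, y s ≤ 1)
    (hfix : M.modBellmanMin T y = y) (σ : M.Strat) (s₀ : S) :
    y s₀ ≤ M.prReach σ T s₀ := by
  obtain ⟨hzero, hyT, hys⟩ := fix_facts hfix
  by_contra hcon
  push_neg at hcon
  haveI : Nonempty S := ⟨s₀⟩
  have hqtop : ∀ s, M.prReach σ T s ≠ ⊤ := fun s => ne_top_of_le_one' (prReach_le_one σ s)
  have hytop : ∀ s, y s ≠ ⊤ := fun s => ne_top_of_le_one' (hy1 s)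
  set f : S → ℝ := fun s => (y s).toReal - (M.prReach σ T s).toReal with hf
  obtain ⟨sm, hsm⟩ := Finite.exists_max f
  have hm0 : 0 < f sm := by
    have h1 : (M.prReach σ T s₀).toReal < (y s₀).toReal :=
      (ENNReal.toReal_lt_toReal (hqtop s₀) (hytop s₀)).mpr hcon
    have h2 : 0 < f s₀ := by simp only [hf]; linarith
    exact h2.trans_le (hsm s₀)
  have hWT : ∀ s, f s = f sm → s ∉ T := by
    intro s hfs hsT
    have h0 : f s = 0 := by
      simp only [hf, hyT s hsT, prReach_of_mem σ hsT, sub_self]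
    exact hm0.ne' (hfs.symm.trans h0)
  have hWp : ∀ s, f s = f sm → M.optPr ODir.dmin T s ≠ 0 := by
    intro s hfs h0
    have hy0 : y s = 0 := hzero s h0
    have h1 : f s ≤ 0 := by
      simp only [hf, hy0, ENNReal.toReal_zero, zero_sub, neg_nonpos]
      exact ENNReal.toReal_nonneg
    rw [hfs] at h1
    linarith
  have hWsucc : ∀ s, f s = f sm → ∀ s', M.P s (σ.1 s) s' ≠ 0 → f s' = f sm := by
    intro s hfs
    by_contra hexn
    push_neg at hexn
    obtain ⟨s₁, hP1, hne1⟩ := hexn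
    have hsT := hWT s hfs
    have hsp := hWp s hfs
    have hy_le : y s ≤ ∑ s' : S, M.P s (σ.1 s) s' * y s' := by
      rw [hys s hsT hsp]
      exact sInf_le ⟨σ.1 s, σ.2 s, rfl⟩
    have hq_eq : M.prReach σ T s = ∑ s' : S, M.P s (σ.1 s) s' * M.prReach σ T s' :=
      prReach_fix σ hsT
    set w : S → ℝ := fun s' => (M.P s (σ.1 s) s').toReal with hw
    have hwnn : ∀ s', 0 ≤ w s' := fun s' => ENNReal.toReal_nonneg
    have hyr : (y s).toReal ≤ ∑ s' : S, w s' * (y s').toReal := by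
      calc (y s).toReal ≤ (∑ s' : S, M.P s (σ.1 s) s' * y s').toReal :=
          (ENNReal.toReal_le_toReal (hytop s)
            (ne_top_of_le_one' (M.sum_mul_le_one hy1 s (σ.1 s)))).mpr hy_le
        _ = ∑ s' : S, w s' * (y s').toReal := by
            rw [ENNReal.toReal_sum (fun s' _ =>
              ENNReal.mul_ne_top (P_ne_top M s (σ.1 s) s') (hytop s'))]
            exact Finset.sum_congr rfl fun s' _ => ENNReal.toReal_mul
    have hqr : (M.prReach σ T s).toReal = ∑ s' : S, w s' * (M.prReach σ T s').toReal := by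
      calc (M.prReach σ T s).toReal
          = (∑ s' : S, M.P s (σ.1 s) s' * M.prReach σ T s').toReal := by rw [← hq_eq]
        _ = ∑ s' : S, w s' * (M.prReach σ T s').toReal := by
            rw [ENNReal.toReal_sum (fun s' _ =>
              ENNReal.mul_ne_top (P_ne_top M s (σ.1 s) s') (hqtop s'))]
            exact Finset.sum_congr rfl fun s' _ => ENNReal.toReal_mul
    have hws : ∑ s' : S, w s' = 1 := by
      have h1 : (∑ s' : S, M.P s (σ.1 s) s') = 1 := σ.2 s
      have h2 := congrArg ENNReal.toReal h1
      rw [ENNReal.toReal_sum (fun s' _ => P_ne_top M s (σ.1 s) s')] at h2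
      simpa using h2
    have key : f s ≤ ∑ s' : S, w s' * f s' := by
      simp only [hf, mul_sub]
      rw [Finset.sum_sub_distrib]
      have := hyr
      have := hqr
      linarith
    have hstep : ∑ s' : S, w s' * f s' < ∑ s' : S, w s' * f sm := by
      apply Finset.sum_lt_sum
      · exact fun i _ => mul_le_mul_of_nonneg_left (hsm i) (hwnn i)
      · refine ⟨s₁, Finset.mem_univ s₁, ?_⟩
        have hw1 : 0 < w s₁ := ENNReal.toReal_pos hP1 (P_ne_top M s (σ.1 s) s₁)
        exact mul_lt_mul_of_pos_left (lt_of_le_of_ne (hsm s₁) hne1) hw1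
    have hlt : ∑ s' : S, w s' * f s' < f sm := by
      have hsum : ∑ s' : S, w s' * f sm = f sm := by rw [← Finset.sum_mul, hws, one_mul]
      linarith
    rw [hfs] at key
    linarith
  have hq0 : ∀ (n : ℕ) (s : S), f s = f sm → M.prBounded σ T n s = 0 := by
    intro n
    induction n with
    | zero => intro s hfs; rw [prBounded_zero, if_neg (hWT s hfs)]
    | succ n ih =>
      intro s hfs
      rw [prBounded_succ, if_neg (hWT s hfs)]
      apply Finset.sum_eq_zero
      intro s' _
      by_cases hP : M.P s (σ.1 s) s' = 0
      · rw [hP, zero_mul]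
      · rw [ih s' (hWsucc s hfs s' hP), mul_zero]
  have hqm : M.prReach σ T sm = 0 :=
    le_antisymm (iSup_le fun n => (hq0 n sm rfl).le) (zero_le)
  have hpm : M.optPr ODir.dmin T sm = 0 :=
    le_antisymm (hqm ▸ optPr_le_prReach σ sm) (zero_le)
  exact hWp sm rfl hpm

lemma optPr_le_of_fix {y : S → ℝ≥0∞} (hy1 : ∀ s, y s ≤ 1)
    (hfix : M.modBellmanMin T y = y) (s : S) :
    M.optPr ODir.dmin T s ≤ y s := by
  obtain ⟨hzero, hyT, hys⟩ := fix_facts hfix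
  have hTpos : ∀ t ∈ T, M.optPr ODir.dmin T t ≠ 0 := fun t ht => by
    rw [optPr_of_mem ht]; exact one_ne_zero
  have hchoice : ∀ t : S, ∃ a ∈ M.enabled t,
      ((M.optPr ODir.dmin T t = 0 → ∀ s', M.P t a s' ≠ 0 → M.optPr ODir.dmin T s' = 0) ∧
       (M.optPr ODir.dmin T t ≠ 0 → (∑ s' : S, M.P t a s' * y s')
         = sInf ((fun a => ∑ s' : S, M.P t a s' * y s') '' M.enabled t))) := by
    intro t
    by_cases hp0 : M.optPr ODir.dmin T t = 0
    · obtain ⟨σ, hσ⟩ := optPr_exists_strat (M := M) (T := T) t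
      have hq0 : M.prReach σ T t = 0 := by rw [← hσ]; exact hp0
      refine ⟨σ.1 t, σ.2 t, fun _ s' hP => ?_, fun h => absurd hp0 h⟩
      have htT : t ∉ T := fun htT => by
        rw [prReach_of_mem σ htT] at hq0; exact one_ne_zero hq0
      have hb0 : ∀ n, M.prBounded σ T n s' = 0 := by
        intro n
        have h1 : M.P t (σ.1 t) s' * M.prBounded σ T n s' ≤ M.prReach σ T t := by
          refine le_trans ?_ (le_iSup (fun n => M.prBounded σ T n t) (n + 1))
          rw [prBounded_succ, if_neg htT]
          exact Finset.single_le_sum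
            (f := fun s' => M.P t (σ.1 t) s' * M.prBounded σ T n s')
            (fun _ _ => zero_le) (Finset.mem_univ s')
        rw [hq0] at h1
        rcases mul_eq_zero.mp (le_zero_iff.mp h1) with h | h
        · exact absurd h hP
        · exact h
      have hr0 : M.prReach σ T s' = 0 :=
        le_antisymm (iSup_le fun n => (hb0 n).le) (zero_le)
      exact le_antisymm (hr0 ▸ optPr_le_prReach σ s') (zero_le)
    · obtain ⟨a, ha, hmin⟩ := exists_min_action (M := M) y t
      exact ⟨a, ha, fun h => absurd h hp0, fun _ => hmin⟩
  choose g hgen hg using hchoice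
  set τ : M.Strat := ⟨g, hgen⟩ with hτdef
  have hZ : ∀ (n : ℕ) (t : S), M.optPr ODir.dmin T t = 0 → M.prBounded τ T n t = 0 := by
    intro n
    induction n with
    | zero =>
      intro t h0
      rw [prBounded_zero, if_neg (fun htT => hTpos t htT h0)]
    | succ n ih =>
      intro t h0
      rw [prBounded_succ, if_neg (fun htT => hTpos t htT h0)]
      apply Finset.sum_eq_zero
      intro s' _
      by_cases hP : M.P t (τ.1 t) s' = 0
      · rw [hP, zero_mul]
      · rw [ih s' ((hg t).1 h0 s' hP), mul_zero]
  have hmain : ∀ (n : ℕ) (t : S), M.prBounded τ T n t ≤ y t := by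
    intro n
    induction n with
    | zero =>
      intro t
      rw [prBounded_zero]
      split
      · exact (hyT t ‹_›).ge
      · exact zero_le
    | succ n ih =>
      intro t
      by_cases htT : t ∈ T
      · rw [prBounded_succ, if_pos htT]
        exact (hyT t htT).ge
      · by_cases hp0 : M.optPr ODir.dmin T t = 0
        · rw [hZ (n + 1) t hp0]
          exact zero_le
        · rw [prBounded_succ, if_neg htT]
          calc ∑ s' : S, M.P t (τ.1 t) s' * M.prBounded τ T n s'
              ≤ ∑ s' : S, M.P t (τ.1 t) s' * y s' :=
                Finset.sum_le_sum fun s' _ => mul_le_mul_right (ih s') _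
            _ = sInf ((fun a => ∑ s' : S, M.P t a s' * y s') '' M.enabled t) :=
                (hg t).2 hp0
            _ = y t := (hys t htT hp0).symm
  exact le_trans (optPr_le_prReach τ s) (iSup_le fun n => hmain n s)

end CertMDP

end Aux

/-- `Φ̃^min` has a unique fixed point on `[0,1]^S`, namely the minimal reachability
probabilities (which are `lfp Φ^min`). -/
theorem stmt13 {S A : Type} [Fintype S] [Fintype A] (M : CertMDP S A) (T : Set S) :
    M.modBellmanMin T (M.optPr ODir.dmin T) = M.optPr ODir.dmin T ∧
    ∀ y : S → ℝ≥0∞, (∀ s, y s ≤ 1) → M.modBellmanMin T y = y → y = M.optPr ODir.dmin T := by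
  constructor
  · funext s
    unfold CertMDP.modBellmanMin
    split
    · next h => exact h.symm
    · exact CertMDP.optPr_bellman_fixed s
  · intro y hy1 hfix
    funext s
    refine le_antisymm ?_ (CertMDP.optPr_le_of_fix hy1 hfix s)
    rw [CertMDP.optPr_min_def]
    refine le_sInf ?_
    rintro x ⟨σ, rfl⟩
    exact CertMDP.le_prReach_of_fix hy1 hfix σ s
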